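/- Let κ be weakly compact and P a partial order satisfying the κ-chain condition, with |P| arbitrary. Given any family of fewer than κ many antichains of P, each of size < κ, there exists A ⊆ P of size < κ containing all these antichains such that every maximal antichain of P that is a subset of A remains maximal in P, and A is an elementary substructure of P for the dense-set structure. -/

import Mathlib

open Set Cardinal

/-- `κ` is weakly compact: `κ` is uncountable and satisfies the partition property
`κ → (κ)²₂`. -/
def IsWeaklyCompact (κ : Cardinal.{u}) : Prop :=
  ℵ₀ < κ ∧ ∀ c : κ.ord.ToType → κ.ord.ToType → Bool,
    ∃ H : Set κ.ord.ToType, Cardinal.mk H = κ ∧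
      ∀ a ∈ H, ∀ b ∈ H, ∀ a' ∈ H, ∀ b' ∈ H, a < b → a' < b' → c a b = c a' b'

/-- Two conditions of a poset are compatible. -/
def Compat {P : Type*} [PartialOrder P] (p q : P) : Prop := ∃ r, r ≤ p ∧ r ≤ q

/-- An antichain in a forcing poset: a pairwise incompatible set of conditions. -/
def IsAntichainIn {P : Type*} [PartialOrder P] (A : Set P) : Prop :=
  ∀ p ∈ A, ∀ q ∈ A, p ≠ q → ¬ Compat p q

open Filter

universe u

/-!
Weak compactness is used through two consequences of the partition property: `κ` is
inaccessible, and any `κ` subsets of `κ` are decided by a `κ`-complete filter, which a minimal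
function tending to infinity makes normal. Inaccessibility lets us close the given antichains
under witnesses to non-maximality inside a set enumerated in length `κ`. If every initial segment
of the enumeration had a maximal antichain `X α` that is not maximal in the whole set, the normal
limit of the `X α` would be a maximal antichain, hence small by the `κ`-cc, hence contained in
almost every `X α`: a contradiction. Dense subsets of a good segment are handled through a
maximal antichain inside them.
-/

namespace Cardinal

variable {κ : Cardinal.{u}}

theorem mk_Iio_ord_toType_lt (i : κ.ord.ToType) : #(Iio i) < κ := by
  simpa using mk_Iio_lt i

theorem mk_Iic_ord_toType_lt (hκ : ℵ₀ ≤ κ) (i : κ.ord.ToType) : #(Iic i) < κ := by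
  rw [← Iio_insert]
  exact mk_insert_le.trans_lt
    (add_lt_of_lt hκ (mk_Iio_ord_toType_lt i) (one_lt_aleph0.trans_le hκ))

theorem exists_gt_mem_of_mk_eq (hκ : ℵ₀ ≤ κ) {H : Set κ.ord.ToType} (hH : #H = κ)
    (x : κ.ord.ToType) : ∃ y ∈ H, x < y := by
  by_contra! h
  exact (hH ▸ mk_le_mk_of_subset h).not_gt (mk_Iic_ord_toType_lt hκ x)

theorem noMaxOrder_of_mk_eq (hκ : ℵ₀ ≤ κ) {H : Set κ.ord.ToType} (hH : #H = κ) :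
    NoMaxOrder H :=
  ⟨fun a => by
    obtain ⟨b, hb, hab⟩ := exists_gt_mem_of_mk_eq hκ hH a
    exact ⟨⟨b, hb⟩, hab⟩⟩

theorem IsRegular.bddAbove_range (hκ : κ.IsRegular) {ι : Type u} (f : ι → κ.ord.ToType)
    (hι : #ι < κ) : BddAbove (range f) := by
  by_contra h
  have hcof : IsCofinal (range f) := fun x => by
    obtain ⟨_, ⟨i, rfl⟩, hi⟩ := not_bddAbove_iff.mp h x
    exact ⟨f i, mem_range_self i, hi.le⟩
  have := (Order.cof_le hcof).trans mk_range_le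
  rw [Ordinal.cof_toType, hκ.cof_ord] at this
  exact this.not_gt hι

theorem IsRegular.exists_subset_image_Iio (hκ : κ.IsRegular) {α : Type u}
    (e : κ.ord.ToType → α) {s : Set α} (hs : s ⊆ range e) (hsκ : #s < κ) :
    ∃ a, s ⊆ e '' Iio a := by
  have := Cardinal.noMaxOrder hκ.aleph0_le
  choose idx hidx using fun x : s => hs x.2
  obtain ⟨b, hb⟩ := hκ.bddAbove_range idx hsκ
  obtain ⟨a, hba⟩ := exists_gt b
  exact ⟨a, fun x hx => ⟨idx ⟨x, hx⟩, (hb (mem_range_self _)).trans_lt hba, hidx ⟨x, hx⟩⟩⟩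

theorem IsInaccessible.exists_mk_setOf_agree_eq (hκ : κ.IsInaccessible) {X : Type u}
    {H : Set X} (hH : #H = κ) (pat : X → κ.ord.ToType → Bool) (α : κ.ord.ToType) :
    ∃ x₀, #{x ∈ H | ∀ j < α, pat x j = pat x₀ j} = κ := by
  obtain ⟨v, hv⟩ := infinite_pigeonhole_card (fun x : H => fun j : Iio α => pat x j) κ hH.ge
    hκ.aleph0_lt.le (by
      simpa [hκ.isRegular.cof_ord] using hκ.isStrongPrelimit (mk_Iio_ord_toType_lt α))
  obtain ⟨⟨x₀, _⟩, hx₀⟩ := (mk_ne_zero_iff.mp (hv.trans_lt' hκ.pos).ne' : Nonempty _)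
  refine ⟨x₀, le_antisymm ((mk_le_mk_of_subset (sep_subset H _)).trans hH.le) (hv.trans ?_)⟩
  refine mk_le_of_injective (f := fun x => ⟨x.1.1, x.1.2, fun j hj => ?_⟩) fun x y h => by
    have := congrArg Subtype.val h
    exact Subtype.ext (Subtype.ext this)
  exact (congr_fun x.2 ⟨j, hj⟩).trans (congr_fun hx₀ ⟨j, hj⟩).symm

theorem IsInaccessible.exists_superset_closed (hκ : κ.IsInaccessible) {α : Type u}
    (w : Set α → α) {base : Set α} (hbase : #base < κ) :
    ∃ Q, base ⊆ Q ∧ #Q ≤ κ ∧ ∀ X ⊆ Q, #X < κ → w X ∈ Q := by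
  have : Nonempty κ.ord.ToType := Ordinal.nonempty_toType_iff.mpr (by simpa using hκ.ne_zero)
  have := Cardinal.noMaxOrder hκ.aleph0_lt.le
  let stage : κ.ord.ToType → Set α := wellFounded_lt.fix fun a IH =>
    base ∪ ⋃ b : Iio a, w '' 𝒫 IH b b.2
  have hstage (a) : stage a = base ∪ ⋃ b : Iio a, w '' 𝒫 stage b := wellFounded_lt.fix_eq _ a
  have hmono : Monotone stage := fun a a' h => by
    rw [hstage a, hstage a']
    exact union_subset_union_right _ (iUnion_subset fun b =>
      subset_iUnion_of_subset ⟨b, b.2.trans_le h⟩ subset_rfl)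
  have hsmall (a) : #(stage a) < κ := by
    induction a using WellFoundedLT.induction with
    | _ a ih =>
      rw [hstage]
      refine (mk_union_le _ _).trans_lt (add_lt_of_lt hκ.aleph0_lt.le hbase ?_)
      refine (card_iUnion_lt_iff_forall_of_isRegular hκ.isRegular
        (mk_Iio_ord_toType_lt a)).mpr fun b => mk_image_le.trans_lt ?_
      rw [mk_powerset]
      exact hκ.isStrongPrelimit (ih b b.2)
  refine ⟨⋃ a, stage a, fun x hx => mem_iUnion.mpr ⟨Classical.arbitrary _, by
    rw [hstage]; exact .inl hx⟩, ?_, fun X hX hXκ => ?_⟩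
  · refine (mk_iUnion_le _).trans ?_
    rw [mk_ord_toType]
    exact (mul_le_mul_right (ciSup_le' fun a => (hsmall a).le) κ).trans
      (mul_eq_self hκ.aleph0_lt.le).le
  · choose a ha using fun x : X => mem_iUnion.mp (hX x.2)
    obtain ⟨b, hb⟩ := hκ.isRegular.bddAbove_range a hXκ
    obtain ⟨c, hbc⟩ := exists_gt b
    refine mem_iUnion.mpr ⟨c, ?_⟩
    rw [hstage]
    exact .inr (mem_iUnion.mpr ⟨⟨b, hbc⟩, X, fun x hx =>
      hmono (hb (mem_range_self ⟨x, hx⟩)) (ha ⟨x, hx⟩), rfl⟩)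

end Cardinal

namespace Pi

variable {ι β : Type*}

theorem eqOn_Iio_of_toLex_le_of_toLex_le [LinearOrder ι] [WellFoundedLT ι] [LinearOrder β]
    {f g h : ι → β} (hfg : toLex f ≤ toLex g) (hgh : toLex g ≤ toLex h) {a : ι}
    (hfh : ∀ j < a, f j = h j) : ∀ j < a, f j = g j := by
  intro j
  induction j using WellFoundedLT.induction with
  | _ j ih =>
    intro hj
    have hlt : ∀ k < j, f k = g k := fun k hk => ih k hk (hk.trans hj)
    exact le_antisymm (apply_le_of_toLex hfg hlt) <| (hfh j hj).symm ▸
      apply_le_of_toLex hgh fun k hk => (hlt k hk).symm.trans (hfh k (hk.trans hj))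

theorem toLex_toDual_lt_toLex_toDual [LT ι] [LT β] {f g : ι → β} :
    toLex (OrderDual.toDual ∘ f) < toLex (OrderDual.toDual ∘ g) ↔ toLex g < toLex f :=
  exists_congr fun _ => and_congr (forall₂_congr fun _ _ => eq_comm) Iff.rfl

/-- An element is determined by the place `d` where its image first differs from the image of
its successor, together with the image of the successor up to `d`. -/
theorem nonempty_embedding_of_strictMono_toLex {H : Type*} [LinearOrder H] [WellFoundedLT H]
    [NoMaxOrder H] [LinearOrder ι] [WellFoundedLT ι] [LinearOrder β] {G : H → ι → β}
    (hG : StrictMono (toLex ∘ G)) : Nonempty (H ↪ Σ d : ι, Iic d → β) := by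
  let := SuccOrder.ofLinearWellFoundedLT H
  choose δ hδ using fun a : H => hG (Order.lt_succ a)
  refine ⟨⟨fun a => ⟨δ a, fun t => G (Order.succ a) t⟩,
    Function.Injective.of_lt_imp_ne fun a b hab heq => ?_⟩⟩
  have hd : δ a = δ b := congrArg Sigma.fst heq
  have hsucc : ∀ t ≤ δ b, G (Order.succ a) t = G (Order.succ b) t := fun t ht => by
    have := congrArg
      (fun p : Σ d : ι, Iic d → β => if h : t ≤ p.1 then some (p.2 ⟨t, h⟩) else none) heq
    simpa [ht, hd ▸ ht] using this
  obtain ⟨hagree, hlt⟩ := hδ b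
  have hle : G (Order.succ a) (δ b) ≤ G b (δ b) :=
    apply_le_of_toLex (hG.monotone (Order.succ_le_of_lt hab)) fun j hj =>
      (hsucc j hj.le).trans (hagree j hj).symm
  exact (hle.trans_lt hlt).ne (hsucc _ le_rfl)

end Pi

/-- On a lexicographically monotone or antitone family, the classes of "same values below `a`"
are convex; two of them of size `κ` are unbounded, hence interleave, hence coincide. -/
theorem eqOn_Iio_of_lexMonotoneOn_of_mk_eq {κ : Cardinal.{u}} (hκ : ℵ₀ ≤ κ) {ι β : Type*}
    [LinearOrder ι] [WellFoundedLT ι] [LinearOrder β] {H : Set κ.ord.ToType}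
    {pat : κ.ord.ToType → ι → β} (hpat : MonotoneOn (toLex ∘ pat) H ∨ AntitoneOn (toLex ∘ pat) H)
    {a : ι} {x₀ x₁ : κ.ord.ToType} (h₀ : #{x ∈ H | ∀ j < a, pat x j = pat x₀ j} = κ)
    (h₁ : #{x ∈ H | ∀ j < a, pat x j = pat x₁ j} = κ) : ∀ j < a, pat x₀ j = pat x₁ j := by
  intro j hj
  obtain ⟨x, hx⟩ := mk_set_ne_zero_iff.mp (h₀ ▸ (aleph0_pos.trans_le hκ).ne')
  obtain ⟨y, hy, hxy⟩ := exists_gt_mem_of_mk_eq hκ h₁ x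
  obtain ⟨z, hz, hyz⟩ := exists_gt_mem_of_mk_eq hκ h₀ y
  have hxz : ∀ k < a, pat x k = pat z k := fun k hk => (hx.2 k hk).trans (hz.2 k hk).symm
  have hxy_agree : pat x j = pat y j := by
    rcases hpat with h | h
    · exact Pi.eqOn_Iio_of_toLex_le_of_toLex_le (h hx.1 hy.1 hxy.le) (h hy.1 hz.1 hyz.le) hxz j hj
    · exact ((Pi.eqOn_Iio_of_toLex_le_of_toLex_le (h hy.1 hz.1 hyz.le) (h hx.1 hy.1 hxy.le)
        (fun k hk => (hxz k hk).symm) j hj).symm.trans (hxz j hj).symm).symm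
  exact (hx.2 j hj).symm.trans (hxy_agree.trans (hy.2 j hj))

namespace Filter

theorem wellFounded_eventually_lt {α β : Type*} [Preorder β] [WellFoundedLT β] (l : Filter α)
    [l.NeBot] [CountableInterFilter l] :
    WellFounded fun f g : α → β => ∀ᶠ x in l, f x < g x := by
  refine wellFounded_iff_isEmpty_descending_chain.mpr ⟨fun ⟨f, hf⟩ => ?_⟩
  obtain ⟨x, hx⟩ := (eventually_countable_forall.mpr hf).exists
  obtain ⟨n, hn⟩ := WellFounded.not_rel_apply_succ (r := (· < ·)) fun n => f n x
  exact hn (hx n)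

theorem exists_eventually_eq_of_not_tendsto {α : Type u} {κ : Cardinal.{u}} {F : Filter α}
    [F.NeBot] [CardinalInterFilter F κ] {g : α → κ.ord.ToType}
    (hle : ∀ ξ, {x | ξ ≤ g x} ∈ F ∨ {x | ξ ≤ g x}ᶜ ∈ F)
    (heq : ∀ ξ, {x | g x = ξ} ∈ F ∨ {x | g x = ξ}ᶜ ∈ F) (hg : ¬ Tendsto g F atTop) :
    ∃ η, ∀ᶠ x in F, g x = η := by
  obtain ⟨ξ, hξ⟩ := not_forall.mp (mt tendsto_atTop.mpr hg)
  have hlt : ∀ᶠ x in F, g x < ξ :=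
    mem_of_superset ((hle ξ).resolve_left hξ) fun x (hx : ¬ ξ ≤ g x) =>
      show g x < ξ from not_le.mp hx
  by_contra hne
  have hall : ∀ᶠ x in F, ∀ η ∈ Iio ξ, g x ≠ η :=
    (eventually_cardinal_ball (mk_Iio_ord_toType_lt ξ)).mpr fun η _ =>
      (heq η).resolve_left fun h => hne ⟨η, h⟩
  obtain ⟨x, hx, hxξ⟩ := (hall.and hlt).exists
  exact hx _ hxξ rfl

end Filter

namespace IsWeaklyCompact

variable {κ : Cardinal.{u}}

theorem ne_zero (hwc : IsWeaklyCompact κ) : κ ≠ 0 :=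
  (aleph0_pos.trans hwc.1).ne'

theorem exists_homogeneous (hwc : IsWeaklyCompact κ) (R : κ.ord.ToType → κ.ord.ToType → Prop) :
    ∃ H : Set κ.ord.ToType, #H = κ ∧
      ((∀ a ∈ H, ∀ b ∈ H, a < b → R a b) ∨ ∀ a ∈ H, ∀ b ∈ H, a < b → ¬ R a b) := by
  classical
  obtain ⟨H, hH, hhom⟩ := hwc.2 fun a b => decide (R a b)
  refine ⟨H, hH, ?_⟩
  by_cases h : ∃ a ∈ H, ∃ b ∈ H, a < b ∧ R a b
  · obtain ⟨a, ha, b, hb, hab, hR⟩ := h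
    exact .inl fun a' ha' b' hb' hab' => by
      simpa [hR] using hhom a' ha' b' hb' a ha b hb hab' hab
  · push Not at h
    exact .inr h

/-- Send each point to a member of a small cofinal set above it: a homogeneous set can neither
lie below one such member nor be mapped injectively. -/
theorem isRegular (hwc : IsWeaklyCompact κ) : κ.IsRegular := by
  refine ⟨hwc.1.le, ?_⟩
  by_contra! hcof
  obtain ⟨S, hS, hScard⟩ := Order.exists_cof_eq (α := κ.ord.ToType)
  rw [Ordinal.cof_toType] at hScard
  choose blk hblkS hblk using fun a => hS a
  obtain ⟨H, hH, hsame | hdiff⟩ := hwc.exists_homogeneous fun a b => blk a = blk b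
  · obtain ⟨a, ha⟩ := mk_set_ne_zero_iff.mp (hH ▸ hwc.ne_zero)
    have hsub : H ⊆ Iic (blk a) := fun b hb => by
      rcases lt_trichotomy b a with h | rfl | h
      · exact hsame b hb a ha h ▸ hblk b
      · exact hblk b
      · exact (hsame a ha b hb h).symm ▸ hblk b
    exact (hH ▸ mk_le_mk_of_subset hsub).not_gt (mk_Iic_ord_toType_lt hwc.1.le _)
  · have hinj : InjOn blk H := fun a ha b hb heq => by
      by_contra hne
      rcases lt_or_gt_of_ne hne with h | h
      · exact hdiff a ha b hb h heq
      · exact hdiff b hb a ha h heq.symm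
    have hle : #H ≤ #S := (mk_image_eq_of_injOn blk H hinj).symm.le.trans
      (mk_le_mk_of_subset (image_subset_iff.mpr fun a _ => hblkS a))
    exact (hH ▸ hle).not_gt (hScard ▸ hcof)

/-- For the least `ν` with `κ ≤ 2 ^ ν`, a homogeneous set for the coloring "the lexicographic
order agrees with the ordinal order" would carry a lexicographically monotone `κ`-sequence in
`ν → Bool`, which is too long. -/
theorem isStrongPrelimit (hwc : IsWeaklyCompact κ) : IsStrongPrelimit κ := by
  by_contra h
  obtain ⟨ν, ⟨hνκ, hκν⟩, hmin⟩ :=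
    wellFounded_lt.has_min {ν | ν < κ ∧ κ ≤ 2 ^ ν} (not_isStrongPrelimit_iff.mp h)
  have hν : ℵ₀ ≤ ν := by
    by_contra! hν
    exact (hκν.trans_lt (power_lt_aleph0 (natCast_lt_aleph0 (n := 2)) hν)).not_gt hwc.1
  obtain ⟨F⟩ : Nonempty (κ.ord.ToType ↪ (ν.ord.ToType → Bool)) := by
    rw [← Cardinal.le_def]
    simpa using hκν
  obtain ⟨H, hH, hmono⟩ := hwc.exists_homogeneous fun a b => toLex (F a) < toLex (F b)
  have := noMaxOrder_of_mk_eq hwc.1.le hH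
  have hshort : ∀ (β : Type) [LinearOrder β], #β = 2 → ∀ G : H → ν.ord.ToType → β,
      ¬ StrictMono (toLex ∘ G) := by
    intro β _ hβ G hG
    obtain ⟨e⟩ := Pi.nonempty_embedding_of_strictMono_toLex hG
    refine (mk_le_of_injective e.injective).not_gt ?_
    rw [hH, mk_sigma]
    refine sum_lt_of_isRegular hwc.isRegular (by simpa using hνκ) fun d => ?_
    have hd := mk_Iic_ord_toType_lt hν d
    by_contra! hle
    exact hmin _ ⟨hd.trans hνκ, by simpa [hβ] using hle⟩ hd
  rcases hmono with hinc | hdec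
  · exact hshort Bool (by simp) (fun a => F a) fun a b hab => hinc a a.2 b b.2 hab
  · refine hshort Boolᵒᵈ (by simp) (fun a => OrderDual.toDual ∘ F a) fun a b hab =>
      Pi.toLex_toDual_lt_toLex_toDual.mpr ?_
    exact (not_lt.mp (hdec a a.2 b b.2 hab)).lt_of_ne fun h =>
      hab.ne (Subtype.ext (F.injective h).symm)

theorem isInaccessible (hwc : IsWeaklyCompact κ) : κ.IsInaccessible :=
  isInaccessible_def.mpr ⟨hwc.1, hwc.isRegular, hwc.ne_zero, hwc.isStrongPrelimit⟩

/-- Color a pair by the lexicographic order of the membership patterns of its members. On a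
homogeneous set the patterns are lexicographically monotone, so for each `α` exactly one class
of "same pattern below `α`" has size `κ`; these classes form the chain. -/
theorem exists_antitone_deciding (hwc : IsWeaklyCompact κ)
    (s : κ.ord.ToType → Set κ.ord.ToType) :
    ∃ K : κ.ord.ToType → Set κ.ord.ToType, Antitone K ∧ (∀ α, #(K α) = κ) ∧
      ∀ ξ, ∃ α, K α ⊆ s ξ ∨ K α ⊆ (s ξ)ᶜ := by
  classical
  have := Cardinal.noMaxOrder hwc.1.le
  set pat : κ.ord.ToType → κ.ord.ToType → Bool := fun β ξ => decide (β ∈ s ξ)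
  obtain ⟨H, hH, hmono⟩ := hwc.exists_homogeneous fun a b => toLex (pat a) ≤ toLex (pat b)
  replace hmono : MonotoneOn (toLex ∘ pat) H ∨ AntitoneOn (toLex ∘ pat) H := by
    refine hmono.imp (fun h a ha b hb hab => ?_) fun h a ha b hb hab => ?_
    · exact hab.lt_or_eq.elim (h a ha b hb) fun hab => hab ▸ le_rfl
    · exact hab.lt_or_eq.elim (fun hab => (not_le.mp (h a ha b hb hab)).le) fun hab => hab ▸ le_rfl
  choose rep hrep using hwc.isInaccessible.exists_mk_setOf_agree_eq hH pat
  refine ⟨fun α => {β ∈ H | ∀ j < α, pat β j = pat (rep α) j}, fun α α' hαα' β hβ => ?_, hrep,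
    fun ξ => ?_⟩
  · have hsub : {β ∈ H | ∀ j < α', pat β j = pat (rep α') j} ⊆
        {β ∈ H | ∀ j < α, pat β j = pat (rep α') j} := fun β hβ =>
      ⟨hβ.1, fun j hj => hβ.2 j (hj.trans_le hαα')⟩
    have hα : #{β ∈ H | ∀ j < α, pat β j = pat (rep α') j} = κ := le_antisymm
      ((mk_le_mk_of_subset (sep_subset H _)).trans hH.le)
      ((hrep α').ge.trans (mk_le_mk_of_subset hsub))
    exact ⟨hβ.1, fun j hj => (hsub hβ).2 j hj |>.trans
      (eqOn_Iio_of_lexMonotoneOn_of_mk_eq hwc.1.le hmono hα (hrep α) j hj)⟩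
  · obtain ⟨α, hα⟩ := exists_gt ξ
    refine ⟨α, ?_⟩
    by_cases hmem : rep α ∈ s ξ
    · exact .inl fun β hβ => by simpa [pat, hmem] using hβ.2 ξ hα
    · exact .inr fun β hβ => by simpa [pat, hmem] using hβ.2 ξ hα

theorem exists_filter_deciding (hwc : IsWeaklyCompact κ) {ι : Type u}
    (s : ι → Set κ.ord.ToType) (hι : #ι ≤ κ) :
    ∃ F : Filter κ.ord.ToType, F.NeBot ∧ CardinalInterFilter F κ ∧ F ≤ atTop ∧
      ∀ i, s i ∈ F ∨ (s i)ᶜ ∈ F := by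
  have := Cardinal.noMaxOrder hwc.1.le
  have : Nonempty κ.ord.ToType := Ordinal.nonempty_toType_iff.mpr (by simpa using hwc.ne_zero)
  obtain ⟨e⟩ : Nonempty (ι ⊕ κ.ord.ToType ↪ κ.ord.ToType) := by
    rw [← Cardinal.le_def, mk_sum, lift_id, lift_id, mk_ord_toType]
    exact add_le_of_le hwc.1.le hι le_rfl
  obtain ⟨K, hanti, hK, hdec⟩ :=
    hwc.exists_antitone_deciding (Function.extend e (Sum.elim s Ioi) fun _ => univ)
  replace hdec (j) : ∃ α, K α ⊆ Sum.elim s Ioi j ∨ K α ⊆ (Sum.elim s Ioi j)ᶜ := by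
    simpa [e.injective.extend_apply] using hdec (e j)
  have hbasis := hasBasis_iInf_principal hanti.directed_ge
  refine ⟨⨅ α, 𝓟 (K α),
    hbasis.neBot_iff.mpr fun {α} _ => mk_set_ne_zero_iff.mp ((hK α).trans_ne hwc.ne_zero),
    ⟨fun S hS hSF => ?_⟩, atTop_basis_Ioi.ge_iff.mpr fun ξ _ => ?_, fun i => ?_⟩
  · choose α hα using fun t : S => hbasis.mem_iff.mp (hSF t t.2)
    obtain ⟨x, hx⟩ := hwc.isRegular.bddAbove_range α hS
    exact hbasis.mem_iff.mpr ⟨x, trivial, subset_sInter fun t ht =>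
      (hanti (hx (mem_range_self ⟨t, ht⟩))).trans (hα ⟨t, ht⟩).2⟩
  · obtain ⟨α, hα | hα⟩ := hdec (.inr ξ)
    · exact hbasis.mem_iff.mpr ⟨α, trivial, hα⟩
    · rw [Sum.elim_inr, compl_Ioi] at hα
      exact ((mk_Iic_ord_toType_lt hwc.1.le ξ).not_ge
        ((hK α).symm.trans_le (mk_le_mk_of_subset hα))).elim
  · obtain ⟨α, hα | hα⟩ := hdec (.inl i)
    · exact .inl (hbasis.mem_iff.mpr ⟨α, trivial, hα⟩)
    · exact .inr (hbasis.mem_iff.mpr ⟨α, trivial, hα⟩)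

/-- Take `f` minimal, for eventual domination, among the members of `𝓕` tending to infinity;
it plays the role of the identity for a normal measure. -/
theorem exists_filter_normal (hwc : IsWeaklyCompact κ)
    (𝓕 : Set (κ.ord.ToType → κ.ord.ToType)) (h𝓕 : #𝓕 ≤ κ) (hid : id ∈ 𝓕) :
    ∃ F : Filter κ.ord.ToType, F.NeBot ∧ CardinalInterFilter F κ ∧ ∃ f ∈ 𝓕,
      Tendsto f F atTop ∧ ∀ g ∈ 𝓕, (∀ᶠ β in F, g β < f β) → ∃ η, ∀ᶠ β in F, g β = η := by
  have hcard : #((𝓕 × κ.ord.ToType) ⊕ (𝓕 × κ.ord.ToType)) ≤ κ := by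
    have hmul : #(𝓕 × κ.ord.ToType) ≤ κ := by
      rw [mk_prod, lift_id, lift_id, mk_ord_toType]
      exact (mul_le_mul_left h𝓕 κ).trans (mul_eq_self hwc.1.le).le
    simp only [mk_sum, lift_id]
    exact add_le_of_le hwc.1.le hmul hmul
  obtain ⟨F, hne, hκF, hF, hdec⟩ := hwc.exists_filter_deciding
    (Sum.elim (fun p => {β | p.2 ≤ p.1.1 β}) (fun p => {β | p.1.1 β = p.2})) hcard
  have := hκF.toCountableInterFilter F hwc.1
  obtain ⟨f, ⟨hf𝓕, hf⟩, hmin⟩ := (wellFounded_eventually_lt F).has_min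
    {f | f ∈ 𝓕 ∧ Tendsto f F atTop} ⟨id, hid, tendsto_id'.mpr hF⟩
  exact ⟨F, hne, hκF, f, hf𝓕, hf, fun g hg hgf => exists_eventually_eq_of_not_tendsto
    (fun ξ => hdec (.inl (⟨g, hg⟩, ξ))) (fun ξ => hdec (.inr (⟨g, hg⟩, ξ)))
    fun hgt => hmin g ⟨hg, hgt⟩ hgf⟩

end IsWeaklyCompact

section Forcing

variable {P : Type*} [PartialOrder P]

theorem Compat.symm {p q : P} (h : Compat p q) : Compat q p :=
  let ⟨r, hp, hq⟩ := h
  ⟨r, hq, hp⟩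

theorem Compat.mono_left {p p' q : P} (h : Compat p q) (hp : p ≤ p') : Compat p' q :=
  let ⟨r, hrp, hrq⟩ := h
  ⟨r, hrp.trans hp, hrq⟩

def IsPredenseOn (X S : Set P) : Prop := ∀ p ∈ S, ∃ q ∈ X, Compat p q

theorem IsPredenseOn.mono {X Y S : Set P} (h : IsPredenseOn X S) (hXY : X ⊆ Y) :
    IsPredenseOn Y S := fun p hp =>
  let ⟨q, hq, hpq⟩ := h p hp
  ⟨q, hXY hq, hpq⟩

def PreservesMaximalAntichains (A S : Set P) : Prop :=
  ∀ X ⊆ A, IsAntichainIn X → IsPredenseOn X A → IsPredenseOn X S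

theorem exists_maximal_antichain_subset (D : Set P) :
    ∃ M ⊆ D, IsAntichainIn M ∧ IsPredenseOn M D := by
  obtain ⟨M, hM⟩ := zorn_subset {Y | Y ⊆ D ∧ IsAntichainIn Y} fun c hc hchain =>
    ⟨⋃₀ c, ⟨sUnion_subset fun Y hY => (hc hY).1,
      hchain.pairwise_sUnion.mpr fun Y hY => (hc hY).2⟩, fun _ => subset_sUnion_of_mem⟩
  refine ⟨M, hM.1.1, hM.1.2, fun d hd => ?_⟩
  by_contra! hinc
  have hdM : d ∈ M := hM.mem_of_prop_insert ⟨insert_subset hd hM.1.1,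
    Set.Pairwise.insert hM.1.2 fun x hx _ => ⟨hinc x hx, fun h => hinc x hx h.symm⟩⟩
  exact hinc d hdM ⟨d, le_rfl, le_rfl⟩

theorem PreservesMaximalAntichains.isPredenseOn {A S D : Set P}
    (hA : PreservesMaximalAntichains A S) (hDA : D ⊆ A) (hD : ∀ p ∈ A, ∃ q ∈ D, q ≤ p) :
    IsPredenseOn D S := by
  obtain ⟨M, hMD, hM, hMpre⟩ := exists_maximal_antichain_subset D
  have hMA : IsPredenseOn M A := fun p hp => by
    obtain ⟨d, hdD, hdp⟩ := hD p hp
    obtain ⟨x, hxM, hdx⟩ := hMpre d hdD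
    exact ⟨x, hxM, hdx.mono_left hdp⟩
  intro p hp
  obtain ⟨x, hxM, hpx⟩ := hA M (hMD.trans hDA) hM hMA p hp
  exact ⟨x, hMD hxM, hpx⟩

end Forcing

/-- Close under a choice of a condition incompatible with all of `X`, for each small `X`. -/
theorem exists_enum_isPredenseOn_univ {P : Type u} [PartialOrder P] [Nonempty P]
    {κ : Cardinal.{u}} (hκ : κ.IsInaccessible) {base : Set P} (hbase : #base < κ) :
    ∃ e : κ.ord.ToType → P, base ⊆ range e ∧
      ∀ X ⊆ range e, #X < κ → IsPredenseOn X (range e) → IsPredenseOn X univ := by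
  let w : Set P → P := fun X => Classical.epsilon fun p => ∀ x ∈ X, ¬ Compat p x
  obtain ⟨Q, hbaseQ, hQκ, hQ⟩ := hκ.exists_superset_closed w hbase
  obtain ⟨g⟩ : Nonempty (Q ↪ κ.ord.ToType) := by
    rwa [← Cardinal.le_def, mk_ord_toType]
  have : Nonempty Q := ⟨⟨w ∅, hQ ∅ (empty_subset Q) (by simpa using hκ.pos)⟩⟩
  have hrange : range (Subtype.val ∘ Function.invFun g) = Q := by
    rw [range_comp, (Function.invFun_surjective g.injective).range_eq, image_univ,
      Subtype.range_coe]
  refine ⟨Subtype.val ∘ Function.invFun g, hrange.symm ▸ hbaseQ, fun X hXe hXκ hX p _ => ?_⟩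
  rw [hrange] at hXe hX
  by_contra! hp
  obtain ⟨q, hq, hwq⟩ := hX (w X) (hQ X hXe hXκ)
  exact Classical.epsilon_spec (p := fun p => ∀ x ∈ X, ¬ Compat p x) ⟨p, hp⟩ q hq hwq

/-- Normality is applied to `ℓ ξ`, which picks below `α` the index of a member of the bad
antichain `X α` compatible with `e ξ`; this makes the limit antichain predense. -/
theorem IsWeaklyCompact.exists_preservesMaximalAntichains_image_Iio {P : Type u}
    [PartialOrder P] {κ : Cardinal.{u}} (hwc : IsWeaklyCompact κ)
    (hcc : ∀ A : Set P, IsAntichainIn A → #A < κ) (e : κ.ord.ToType → P) (α₀ : κ.ord.ToType) :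
    ∃ α, α₀ ≤ α ∧ PreservesMaximalAntichains (e '' Iio α) (range e) := by
  have := Cardinal.noMaxOrder hwc.1.le
  have : Infinite κ.ord.ToType := infinite_iff.mpr (by simpa using hwc.1.le)
  by_contra! hbad
  unfold PreservesMaximalAntichains at hbad
  push Not at hbad
  choose! X hXsub hXanti hXpre hXbad using hbad
  have hwit : ∀ ξ α, α₀ ≤ α → ξ < α → ∃ η, η < α ∧ e η ∈ X α ∧ Compat (e ξ) (e η) := by
    intro ξ α hα hξ
    obtain ⟨q, hq, hcq⟩ := hXpre α hα (e ξ) (mem_image_of_mem e hξ)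
    obtain ⟨η, hη, rfl⟩ := hXsub α hα hq
    exact ⟨η, hη, hq, hcq⟩
  let ℓ : κ.ord.ToType → κ.ord.ToType → κ.ord.ToType := fun ξ α =>
    Classical.epsilon fun η => η < α ∧ e η ∈ X α ∧ Compat (e ξ) (e η)
  have hℓ (ξ α) (hα : α₀ ≤ α) (hξ : ξ < α) :
      ℓ ξ α < α ∧ e (ℓ ξ α) ∈ X α ∧ Compat (e ξ) (e (ℓ ξ α)) :=
    Classical.epsilon_spec (hwit ξ α hα hξ)
  let comp : List κ.ord.ToType → κ.ord.ToType → κ.ord.ToType := fun l =>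
    (l.map ℓ).foldr (· ∘ ·) id
  obtain ⟨F, hF, hκF, f, ⟨lf, rfl⟩, hf, hnormal⟩ := hwc.exists_filter_normal (range comp)
    (mk_range_le.trans (by rw [mk_list_eq_mk, mk_ord_toType])) ⟨[], rfl⟩
  have hlarge (ξ) : ∀ᶠ β in F, ξ < comp lf β ∧ α₀ ≤ comp lf β :=
    (hf.eventually_gt_atTop ξ).and (hf.eventually_ge_atTop α₀)
  set Xlim := {x | ∀ᶠ β in F, x ∈ X (comp lf β)}
  have hanti : IsAntichainIn Xlim := fun x hx y hy hxy => by
    obtain ⟨β, hxβ, hyβ, -, hβ⟩ := (hx.and (hy.and (hlarge α₀))).exists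
    exact hXanti _ hβ x hxβ y hyβ hxy
  have hpre : IsPredenseOn Xlim (range e) := by
    rintro _ ⟨ξ, rfl⟩
    have hspec := (hlarge ξ).mono fun β hβ => hℓ ξ _ hβ.2 hβ.1
    obtain ⟨η, hη⟩ := hnormal _ ⟨ξ :: lf, rfl⟩ (hspec.mono fun β hβ => hβ.1)
    have hηX : ∀ᶠ β in F, e η ∈ X (comp lf β) ∧ Compat (e ξ) (e η) :=
      (hη.and hspec).mono fun β ⟨h, hβ⟩ => h ▸ hβ.2
    obtain ⟨β, -, hcompat⟩ := hηX.exists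
    exact ⟨e η, hηX.mono fun β hβ => hβ.1, hcompat⟩
  obtain ⟨β, hβ, -, hα₀⟩ := (((eventually_cardinal_ball (hcc Xlim hanti)).mpr
    fun x hx => hx).and (hlarge α₀)).exists
  exact hXbad _ hα₀ (hpre.mono hβ)

/-- Let `κ` be weakly compact and `P` a `κ`-cc poset of arbitrary size.  Given fewer than
`κ` many antichains of `P`, each of size `< κ`, there is `A ⊆ P` of size `< κ` containing
all of them such that `A` is a complete suborder of `P`: every maximal antichain of the
suborder `A` remains maximal in `P`, and `A` reflects the dense-set structure of `P`
(every subset of `A` dense in `A` is predense in `P`). -/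
theorem small_complete_suborder_exists {P : Type u} [PartialOrder P]
    (κ : Cardinal.{u}) (hwc : IsWeaklyCompact κ)
    (hcc : ∀ A : Set P, IsAntichainIn A → Cardinal.mk A < κ)
    (ι : Type u) (hι : Cardinal.mk ι < κ)
    (B : ι → Set P) (hB : ∀ i, IsAntichainIn (B i) ∧ Cardinal.mk (B i) < κ) :
    ∃ A : Set P, Cardinal.mk A < κ ∧ (∀ i, B i ⊆ A) ∧
      (∀ X ⊆ A, IsAntichainIn X → (∀ p ∈ A, ∃ q ∈ X, Compat p q) →
        ∀ p : P, ∃ q ∈ X, Compat p q) ∧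
      (∀ D ⊆ A, (∀ p ∈ A, ∃ q ∈ D, q ≤ p) → ∀ p : P, ∃ q ∈ D, Compat p q) := by
  rcases isEmpty_or_nonempty P with hP | hP
  · exact ⟨∅, by simpa using hwc.ne_zero.bot_lt, fun i => by simp [eq_empty_of_isEmpty],
      fun _ _ _ _ p => isEmptyElim p, fun _ _ _ p => isEmptyElim p⟩
  have hbase : #(⋃ i, B i) < κ :=
    (card_iUnion_lt_iff_forall_of_isRegular hwc.isRegular hι).mpr fun i => (hB i).2
  obtain ⟨e, hbase_e, he⟩ := exists_enum_isPredenseOn_univ hwc.isInaccessible hbase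
  obtain ⟨α₀, hα₀⟩ := hwc.isRegular.exists_subset_image_Iio e hbase_e hbase
  obtain ⟨α, hα₀α, hα⟩ := hwc.exists_preservesMaximalAntichains_image_Iio hcc e α₀
  have hAκ : #(e '' Iio α) < κ := mk_image_le.trans_lt (mk_Iio_ord_toType_lt α)
  have hA : PreservesMaximalAntichains (e '' Iio α) univ := fun X hXA hX hXpre =>
    he X (hXA.trans (image_subset_range e _)) ((mk_le_mk_of_subset hXA).trans_lt hAκ)
      (hα X hXA hX hXpre)
  exact ⟨e '' Iio α, hAκ,
    fun i => (subset_iUnion B i).trans (hα₀.trans (image_mono (Iio_subset_Iio hα₀α))),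
    fun X hXA hX hXpre p => hA X hXA hX hXpre p (mem_univ p),
    fun D hDA hD p => hA.isPredenseOn hDA hD p (mem_univ p)⟩
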